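/- arXiv:2511.22281 — 2 statements merged into one kernel-verified Lean document; each statement's English description precedes it below -/
import Mathlib

section
/- Let f : S → ℝ be a monotone submodular set function on subsets of a finite ground set V with f(∅) = 0, and let k ≥ 1. If G_k is the value achieved by the greedy algorithm after k steps (at each step adding the element with maximal marginal gain), and OPT_k is the maximum of f over subsets of size at most k, then G_k ≥ (1 - (1 - 1/k)^k)·OPT_k ≥ (1 - 1/e)·OPT_k. -/
/-!
Let `T` have at most `k` elements. By submodularity the elements of `T` together raise `f`
above `f (S i)` by at least the gap `f T - f (S i)`, so the best single element gains at least
a `1/k` fraction of that gap. Hence the gap contracts by `1 - 1/k` per greedy step, and after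
`k` steps it is at most `(1 - 1/k)^k f T ≤ e⁻¹ f T`.
-/

open Finset

section Submodular

variable {V : Type*} [DecidableEq V]

def IsSubmodular (f : Finset V → ℝ) : Prop :=
  ∀ A B : Finset V, A ⊆ B → ∀ x ∉ B, f (insert x B) - f B ≤ f (insert x A) - f A

variable {f : Finset V → ℝ}

theorem IsSubmodular.le_add_sum_marginal (hsub : IsSubmodular f) (A D : Finset V) :
    f (A ∪ D) ≤ f A + ∑ x ∈ D, (f (insert x A) - f A) := by
  induction D using Finset.induction_on with
  | empty => simp
  | @insert x D hxD ih =>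
    rw [sum_insert hxD, union_insert]
    by_cases hxA : x ∈ A
    · rw [insert_eq_of_mem (mem_union_left D hxA), insert_eq_of_mem hxA]
      linarith
    · have hxAD : x ∉ A ∪ D := by simp [hxA, hxD]
      linarith [hsub A (A ∪ D) subset_union_left x hxAD]

theorem IsSubmodular.sub_le_card_mul_of_forall_le (hmono : Monotone f) (hsub : IsSubmodular f)
    {A T : Finset V} {x : V} (hx : ∀ y, f (insert y A) ≤ f (insert x A)) :
    f T - f A ≤ #T * (f (insert x A) - f A) :=
  calc f T - f A ≤ f (A ∪ T) - f A := by gcongr; exact hmono subset_union_right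
    _ ≤ ∑ y ∈ T, (f (insert y A) - f A) := by linarith [hsub.le_add_sum_marginal A T]
    _ ≤ ∑ _y ∈ T, (f (insert x A) - f A) := sum_le_sum fun y _ => by gcongr; exact hx y
    _ = #T * (f (insert x A) - f A) := by rw [sum_const, nsmul_eq_mul]

theorem IsSubmodular.sub_le_one_sub_inv_mul_of_forall_le (hmono : Monotone f)
    (hsub : IsSubmodular f) {A T : Finset V} {x : V} {k : ℕ} (hk : 1 ≤ k) (hT : #T ≤ k)
    (hx : ∀ y, f (insert y A) ≤ f (insert x A)) :
    f T - f (insert x A) ≤ (1 - 1 / k) * (f T - f A) := by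
  have hgain : 0 ≤ f (insert x A) - f A := sub_nonneg.2 (hmono (subset_insert x A))
  have hkpos : (0 : ℝ) < k := by exact_mod_cast hk
  have hgap : f T - f A ≤ k * (f (insert x A) - f A) :=
    (hsub.sub_le_card_mul_of_forall_le hmono hx).trans (by gcongr)
  have : (f T - f A) / k ≤ f (insert x A) - f A := (div_le_iff₀' hkpos).2 hgap
  rw [one_sub_mul, one_div_mul_eq_div]
  linarith

end Submodular

theorem greedy_submodular_guarantee_general {V : Type*} [DecidableEq V]
    (f : Finset V → ℝ)
    (hmono : ∀ A B : Finset V, A ⊆ B → f A ≤ f B)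
    (hsub : ∀ A B : Finset V, A ⊆ B → ∀ x ∉ B,
      f (insert x B) - f B ≤ f (insert x A) - f A)
    (hempty : f ∅ = 0)
    (k : ℕ) (hk : 1 ≤ k)
    (S : ℕ → Finset V) (hS0 : S 0 = ∅)
    (hgreedy : ∀ i, ∃ x, S (i + 1) = insert x (S i) ∧
      ∀ y, f (insert y (S i)) ≤ f (insert x (S i)))
    (T : Finset V) (hT : T.card ≤ k) :
    (1 - (1 - 1 / (k:ℝ)) ^ k) * f T ≤ f (S k) ∧
      (1 - (Real.exp 1)⁻¹) * f T ≤ (1 - (1 - 1 / (k:ℝ)) ^ k) * f T := by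
  have hkR : (1 : ℝ) ≤ k := by exact_mod_cast hk
  have hgap : f T - f (S k) ≤ (1 - 1 / (k:ℝ)) ^ k * (f T - f (S 0)) := by
    refine le_geom (u := fun i => f T - f (S i)) ?_ k fun i _ => ?_
    · exact sub_nonneg.2 (div_le_one_of_le₀ hkR k.cast_nonneg)
    · obtain ⟨x, hSx, hx⟩ := hgreedy i
      rw [hSx]
      exact IsSubmodular.sub_le_one_sub_inv_mul_of_forall_le hmono hsub hk hT hx
  rw [hS0, hempty, sub_zero] at hgap
  have hfT : 0 ≤ f T := hempty ▸ hmono ∅ T (empty_subset T)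
  have hexp : (1 - 1 / (k:ℝ)) ^ k ≤ (Real.exp 1)⁻¹ := by
    simpa [Real.exp_neg] using Real.one_sub_div_pow_le_exp_neg (t := 1) hkR
  exact ⟨by linarith, by gcongr⟩

/-- Nemhauser–Wolsey–Fisher: greedy maximization of a monotone submodular function `f` with
`f ∅ = 0` achieves, after `k` steps, at least `(1-(1-1/k)^k) ≥ (1-1/e)` times the optimum
over sets of size at most `k`. -/
theorem greedy_submodular_guarantee {V : Type*} [Fintype V] [DecidableEq V]
    (f : Finset V → ℝ)
    (hmono : ∀ A B : Finset V, A ⊆ B → f A ≤ f B)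
    (hsub : ∀ A B : Finset V, A ⊆ B → ∀ x ∉ B,
      f (insert x B) - f B ≤ f (insert x A) - f A)
    (hempty : f ∅ = 0)
    (k : ℕ) (hk : 1 ≤ k)
    (S : ℕ → Finset V) (hS0 : S 0 = ∅)
    (hgreedy : ∀ i, ∃ x, S (i + 1) = insert x (S i) ∧
      ∀ y, f (insert y (S i)) ≤ f (insert x (S i)))
    (T : Finset V) (hT : T.card ≤ k) :
    (1 - (1 - 1 / (k:ℝ)) ^ k) * f T ≤ f (S k) ∧
      (1 - (Real.exp 1)⁻¹) * f T ≤ (1 - (1 - 1 / (k:ℝ)) ^ k) * f T :=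
  greedy_submodular_guarantee_general f hmono hsub hempty k hk S hS0 hgreedy T hT
end

section
/- Let P, Q be column-stochastic matrices of the same size and c ∈ (0,1), with PageRank vectors r_P and r_Q solving r = (1-c)β + cPr and r = (1-c)β + cQr respectively for the same probability vector β. Then ‖r_P - r_Q‖₁ ≤ (c/(1-c))·‖(P - Q) r_Q‖₁. -/
/-!
Subtracting the two fixed-point equations gives `r_P - r_Q = c P (r_P - r_Q) + c (P - Q) r_Q`.
A column-stochastic matrix does not increase the `ℓ¹` norm, so taking `ℓ¹` norms yields
`(1 - c) ‖r_P - r_Q‖₁ ≤ c ‖(P - Q) r_Q‖₁`.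
-/

open Finset

namespace Matrix

variable {n R : Type*} [Fintype n]

theorem sub_eq_mulVec_sub_add_sub_mulVec [CommRing R] {A B : Matrix n n R} {b x y : n → R}
    (hx : x = b + A *ᵥ x) (hy : y = b + B *ᵥ y) :
    x - y = A *ᵥ (x - y) + (A - B) *ᵥ y := by
  conv_lhs => rw [hx, hy]
  rw [mulVec_sub, sub_mulVec]
  abel

variable [DecidableEq n]

theorem sum_abs_mulVec_le_of_mem_colStochastic [CommRing R] [LinearOrder R] [IsOrderedRing R]
    {M : Matrix n n R} (hM : M ∈ colStochastic R n) (x : n → R) :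
    ∑ i, |(M *ᵥ x) i| ≤ ∑ i, |x i| :=
  calc ∑ i, |(M *ᵥ x) i|
      ≤ ∑ i, (M *ᵥ fun j ↦ |x j|) i := by
        refine sum_le_sum fun i _ ↦ (abs_sum_le_sum_abs _ _).trans_eq (sum_congr rfl fun j _ ↦ ?_)
        rw [abs_mul, abs_of_nonneg (nonneg_of_mem_colStochastic hM)]
    _ = ∑ i, |x i| := sum_mulVec_of_mem_colStochastic hM

theorem sum_abs_le_of_eq_smul_mulVec_add_smul [Field R] [LinearOrder R] [IsStrictOrderedRing R]
    {P : Matrix n n R} (hP : P ∈ colStochastic R n) {c : R} (hc₀ : 0 ≤ c) (hc₁ : c < 1)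
    {d e : n → R} (hd : d = c • P *ᵥ d + c • e) :
    ∑ i, |d i| ≤ c / (1 - c) * ∑ i, |e i| := by
  have hcontract : ∑ i, |d i| ≤ c * ∑ i, |d i| + c * ∑ i, |e i| :=
    calc ∑ i, |d i|
        ≤ ∑ i, (c * |(P *ᵥ d) i| + c * |e i|) := by
          refine sum_le_sum fun i _ ↦ ?_
          conv_lhs => rw [hd]
          simpa only [Pi.add_apply, Pi.smul_apply, smul_eq_mul, abs_mul, abs_of_nonneg hc₀]
            using abs_add_le (c * (P *ᵥ d) i) (c * e i)
      _ = c * ∑ i, |(P *ᵥ d) i| + c * ∑ i, |e i| := by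
          rw [sum_add_distrib, mul_sum, mul_sum]
      _ ≤ c * ∑ i, |d i| + c * ∑ i, |e i| := by
          grw [sum_abs_mulVec_le_of_mem_colStochastic hP d]
  rw [div_mul_eq_mul_div, le_div_iff₀ (sub_pos.mpr hc₁)]
  linarith

end Matrix

open Matrix in
theorem pagerank_perturbation_general (N : ℕ) (P Q : Matrix (Fin N) (Fin N) ℝ) (c : ℝ)
    (hc : c ∈ Set.Ioo (0:ℝ) 1)
    (hP_nonneg : ∀ i j, 0 ≤ P i j) (hP_col : ∀ j, ∑ i, P i j = 1)
    (β : Fin N → ℝ)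
    (rP rQ : Fin N → ℝ)
    (hrP : rP = (1 - c) • β + (c • P).mulVec rP)
    (hrQ : rQ = (1 - c) • β + (c • Q).mulVec rQ) :
    ∑ i, |rP i - rQ i| ≤ (c / (1 - c)) * ∑ i, |(P - Q).mulVec rQ i| := by
  have hP : P ∈ colStochastic ℝ (Fin N) := mem_colStochastic_iff_sum.mpr ⟨hP_nonneg, hP_col⟩
  have hdiff : rP - rQ = c • P *ᵥ (rP - rQ) + c • (P - Q) *ᵥ rQ := by
    rw [← smul_mulVec, ← smul_mulVec, smul_sub]
    exact sub_eq_mulVec_sub_add_sub_mulVec hrP hrQ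
  exact sum_abs_le_of_eq_smul_mulVec_add_smul hP hc.1.le hc.2 hdiff

/-- Perturbation stability of PageRank: if `r_P` and `r_Q` are fixed points for
column-stochastic `P` and `Q` with the same teleport vector `β`, then
`‖r_P - r_Q‖₁ ≤ (c/(1-c)) ‖(P - Q) r_Q‖₁`. -/
theorem pagerank_perturbation (N : ℕ) (P Q : Matrix (Fin N) (Fin N) ℝ) (c : ℝ)
    (hc : c ∈ Set.Ioo (0:ℝ) 1)
    (hP_nonneg : ∀ i j, 0 ≤ P i j) (hP_col : ∀ j, ∑ i, P i j = 1)
    (hQ_nonneg : ∀ i j, 0 ≤ Q i j) (hQ_col : ∀ j, ∑ i, Q i j = 1)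
    (β : Fin N → ℝ) (hβ_nonneg : ∀ j, 0 ≤ β j) (hβ_sum : ∑ j, β j = 1)
    (rP rQ : Fin N → ℝ)
    (hrP : rP = (1 - c) • β + (c • P).mulVec rP)
    (hrQ : rQ = (1 - c) • β + (c • Q).mulVec rQ) :
    ∑ i, |rP i - rQ i| ≤ (c / (1 - c)) * ∑ i, |(P - Q).mulVec rQ i| :=
  pagerank_perturbation_general N P Q c hc hP_nonneg hP_col β rP rQ hrP hrQ
end
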